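/- arXiv:2403.09251 — 4 statements merged into one kernel-verified Lean document; each statement's English description precedes it below -/
import Mathlib

section
/- Let Σ ⊆ ℝ² be a connected compact set with more than one point, x ∈ Σ, and 0 < r < diam(Σ)/2. Then the 1-dimensional Hausdorff measure of Σ ∩ B_r(x) satisfies ℋ¹(Σ ∩ B_r(x)) ≥ r. -/
open Set Metric MeasureTheory

/-- Lower Ahlfors density estimate for continua: if `Σ ⊆ ℝ²` is
compact, connected, with more than one point, `x ∈ Σ` and `0 < r < diam(Σ)/2`,
then `ℋ¹(Σ ∩ B_r(x)) ≥ r`. -/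
theorem lower_ahlfors_density
    (S : Set (EuclideanSpace ℝ (Fin 2))) (hc : IsCompact S) (hconn : IsConnected S)
    (hnt : S.Nontrivial)
    (x : EuclideanSpace ℝ (Fin 2)) (hx : x ∈ S) (r : ℝ)
    (hr0 : 0 < r) (hr : r < diam S / 2) :
    ENNReal.ofReal r ≤ μH[1] (S ∩ ball x r) := by
  -- find a point far from x
  obtain ⟨y, hyS, hy⟩ : ∃ y ∈ S, r < dist y x := by
    by_contra h
    push_neg at h
    have : diam S ≤ 2 * r := by
      apply diam_le_of_forall_dist_le (by linarith)
      intro a ha b hb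
      calc dist a b ≤ dist a x + dist x b := dist_triangle a x b
        _ ≤ r + r := by
            have h1 := h a ha
            have h2 := h b hb
            rw [dist_comm x b]; linarith
        _ = 2 * r := by ring
    linarith
  set f : EuclideanSpace ℝ (Fin 2) → ℝ := fun z => dist z x with hf
  have hlip : LipschitzWith 1 f := LipschitzWith.dist_left x
  have hpc : IsPreconnected (f '' S) :=
    hconn.isPreconnected.image f hlip.continuous.continuousOn
  have h0 : (0 : ℝ) ∈ f '' S := ⟨x, hx, by simp [hf]⟩
  have hd : dist y x ∈ f '' S := ⟨y, hyS, rfl⟩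
  have hIcc : Icc 0 (dist y x) ⊆ f '' S := hpc.Icc_subset h0 hd
  have hIco : Ico 0 r ⊆ f '' (S ∩ ball x r) := by
    intro t ht
    obtain ⟨z, hzS, hzt⟩ := hIcc ⟨ht.1, le_of_lt (lt_of_lt_of_le ht.2 hy.le)⟩
    exact ⟨z, ⟨hzS, by rw [mem_ball]; rw [show dist z x = t from hzt]; exact ht.2⟩, hzt⟩
  calc ENNReal.ofReal r = volume (Ico (0:ℝ) r) := by simp
    _ = μH[1] (Ico (0:ℝ) r) := by rw [MeasureTheory.hausdorffMeasure_real]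
    _ ≤ μH[1] (f '' (S ∩ ball x r)) := measure_mono hIco
    _ ≤ (1:NNReal) ^ (1:ℝ) * μH[1] (S ∩ ball x r) :=
        hlip.hausdorffMeasure_image_le one_pos.le _
    _ = μH[1] (S ∩ ball x r) := by simp
end

section
/- Let S = ⋃_{k≥0} s_k where s_k is the segment from the origin to the point (2^{−k}·cos(π/(k+1)), 2^{−k}·sin(π/(k+1))). Then S is not Ahlfors regular at the origin: for every constant c₂ > 0 and every r₀ > 0 there exists 0 < r < r₀ with ℋ¹(S ∩ B_r(0)) > c₂·r. In particular ℋ¹(S ∩ B_{2^{−n}}(0)) = (2+n)·2^{−n} for every n ∈ ℕ. -/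
open Set Metric MeasureTheory Real

/-- The endpoint of the `k`-th segment: polar coordinates `(2^(-k), π/(k+1))`. -/
noncomputable def segEndpoint (k : ℕ) : EuclideanSpace ℝ (Fin 2) :=
  (EuclideanSpace.equiv (Fin 2) ℝ).symm
    ![(2 : ℝ) ^ (-(k : ℝ)) * Real.cos (Real.pi / (k + 1)),
      (2 : ℝ) ^ (-(k : ℝ)) * Real.sin (Real.pi / (k + 1))]

/-- The `k`-th segment `s_k`, joining the origin to `segEndpoint k`. -/
noncomputable def seg (k : ℕ) : Set (EuclideanSpace ℝ (Fin 2)) :=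
  segment ℝ 0 (segEndpoint k)

lemma norm_segEndpoint (k : ℕ) : ‖segEndpoint k‖ = (2:ℝ) ^ (-(k:ℝ)) := by
  have h : (0:ℝ) < (2:ℝ) ^ (-(k:ℝ)) := Real.rpow_pos_of_pos two_pos _
  rw [EuclideanSpace.norm_eq]
  simp only [Fin.sum_univ_two]
  rw [show (segEndpoint k 0 : ℝ) = (2:ℝ)^(-(k:ℝ)) * Real.cos (Real.pi / (k+1)) from rfl,
      show (segEndpoint k 1 : ℝ) = (2:ℝ)^(-(k:ℝ)) * Real.sin (Real.pi / (k+1)) from rfl]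
  rw [Real.norm_eq_abs, Real.norm_eq_abs, sq_abs, sq_abs]
  have := Real.sin_sq_add_cos_sq (Real.pi / (k+1))
  rw [show ((2:ℝ)^(-(k:ℝ)) * Real.cos (Real.pi/(k+1)))^2 + ((2:ℝ)^(-(k:ℝ)) * Real.sin (Real.pi/(k+1)))^2
      = ((2:ℝ)^(-(k:ℝ)))^2 by nlinarith [this]]
  exact Real.sqrt_sq h.le

lemma seg_eq (k : ℕ) : seg k = (fun t : ℝ => t • segEndpoint k) '' Icc 0 1 := by
  rw [seg, segment_eq_image]
  simp

lemma measure_seg_inter_ball (k : ℕ) (r : ℝ) :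
    μH[1] (seg k ∩ ball 0 r) = ENNReal.ofReal (min ((2:ℝ) ^ (-(k:ℝ))) r) := by
  set L : ℝ := (2:ℝ) ^ (-(k:ℝ)) with hL
  have hLpos : 0 < L := Real.rpow_pos_of_pos two_pos _
  have hpre : (fun t : ℝ => t • segEndpoint k) ⁻¹' (ball 0 r) ∩ Icc 0 1
      = Icc 0 1 ∩ Iio (r / L) := by
    ext t
    simp only [mem_inter_iff, mem_preimage, mem_ball, dist_zero_right, norm_smul,
      Real.norm_eq_abs, norm_segEndpoint, mem_Icc, mem_Iio]
    constructor
    · rintro ⟨h1, h2, h3⟩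
      rw [abs_of_nonneg h2] at h1
      exact ⟨⟨h2, h3⟩, (lt_div_iff₀ hLpos).2 h1⟩
    · rintro ⟨⟨h2, h3⟩, h1⟩
      exact ⟨by rw [abs_of_nonneg h2]; exact (lt_div_iff₀ hLpos).1 h1, h2, h3⟩
  rw [seg_eq, ← Set.image_inter_preimage, Set.inter_comm (Icc 0 1) _, hpre,
    hausdorffMeasure_smul_right_image, hausdorffMeasure_real]
  have hvol : volume (Icc (0:ℝ) 1 ∩ Iio (r / L)) = ENNReal.ofReal (min 1 (r / L)) := by
    rcases le_or_gt (r / L) 1 with h | h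
    · have : Icc (0:ℝ) 1 ∩ Iio (r / L) = Ico 0 (r / L) := by
        ext x
        simp only [mem_inter_iff, mem_Icc, mem_Iio, mem_Ico]
        constructor
        · rintro ⟨⟨hx0, _⟩, hx⟩; exact ⟨hx0, hx⟩
        · rintro ⟨hx0, hx⟩; exact ⟨⟨hx0, le_trans hx.le h⟩, hx⟩
      rw [this, Real.volume_Ico, sub_zero, min_eq_right h]
    · have : Icc (0:ℝ) 1 ∩ Iio (r / L) = Icc 0 1 :=
        inter_eq_left.2 fun x hx => lt_of_le_of_lt hx.2 h
      rw [this, Real.volume_Icc, sub_zero, min_eq_left h.le]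
  rw [hvol]
  have hnn : (‖segEndpoint k‖₊ : ENNReal) = ENNReal.ofReal L := by
    rw [← enorm_eq_nnnorm, ← ofReal_norm, norm_segEndpoint]
  rw [ENNReal.smul_def, smul_eq_mul, hnn, ← ENNReal.ofReal_mul hLpos.le]
  congr 1
  rw [mul_min_of_nonneg _ _ hLpos.le, mul_one, mul_div_cancel₀ _ hLpos.ne']

lemma theta_mem (k : ℕ) : Real.pi / (k + 1) ∈ Icc 0 Real.pi := by
  constructor
  · positivity
  · rw [div_le_iff₀ (by positivity)]
    nlinarith [Real.pi_pos, Nat.cast_nonneg (α := ℝ) k]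

lemma seg_inter_seg {j k : ℕ} (h : j ≠ k) : seg j ∩ seg k ⊆ {(0 : EuclideanSpace ℝ (Fin 2))} := by
  rintro x ⟨hxj, hxk⟩
  rw [seg_eq] at hxj hxk
  obtain ⟨a, ⟨ha0, ha1⟩, rfl⟩ := hxj
  obtain ⟨b, ⟨hb0, hb1⟩, hab⟩ := hxk
  have hLjpos : (0:ℝ) < (2:ℝ) ^ (-(j:ℝ)) := Real.rpow_pos_of_pos two_pos _
  have hLkpos : (0:ℝ) < (2:ℝ) ^ (-(k:ℝ)) := Real.rpow_pos_of_pos two_pos _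
  have h0 : b * ((2:ℝ) ^ (-(k:ℝ)) * Real.cos (Real.pi / (k+1)))
      = a * ((2:ℝ) ^ (-(j:ℝ)) * Real.cos (Real.pi / (j+1))) := by
    simpa [segEndpoint] using congrArg (fun v => v 0) hab
  have h1 : b * ((2:ℝ) ^ (-(k:ℝ)) * Real.sin (Real.pi / (k+1)))
      = a * ((2:ℝ) ^ (-(j:ℝ)) * Real.sin (Real.pi / (j+1))) := by
    simpa [segEndpoint] using congrArg (fun v => v 1) hab
  have cj := Real.sin_sq_add_cos_sq (Real.pi / (j+1))
  have ck := Real.sin_sq_add_cos_sq (Real.pi / (k+1))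
  have hA0 : 0 ≤ a * (2:ℝ) ^ (-(j:ℝ)) := mul_nonneg ha0 hLjpos.le
  have hB0 : 0 ≤ b * (2:ℝ) ^ (-(k:ℝ)) := mul_nonneg hb0 hLkpos.le
  have e0 := congrArg (fun x : ℝ => x^2) h0
  have e1 := congrArg (fun x : ℝ => x^2) h1
  have hsq : (a * (2:ℝ) ^ (-(j:ℝ)))^2 = (b * (2:ℝ) ^ (-(k:ℝ)))^2 := by
    linear_combination (b * (2:ℝ) ^ (-(k:ℝ)))^2 * ck - (a * (2:ℝ) ^ (-(j:ℝ)))^2 * cj - e0 - e1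
  have hAB : a * (2:ℝ) ^ (-(j:ℝ)) = b * (2:ℝ) ^ (-(k:ℝ)) := by
    rw [← Real.sqrt_sq hA0, ← Real.sqrt_sq hB0, hsq]
  have hAzero : a * (2:ℝ) ^ (-(j:ℝ)) = 0 := by
    by_contra hAne
    have hApos : 0 < a * (2:ℝ) ^ (-(j:ℝ)) := lt_of_le_of_ne hA0 (Ne.symm hAne)
    have hcos : Real.cos (Real.pi / (j+1)) = Real.cos (Real.pi / (k+1)) := by
      have h2 : (a * (2:ℝ) ^ (-(j:ℝ))) * Real.cos (Real.pi / (j+1))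
          = (a * (2:ℝ) ^ (-(j:ℝ))) * Real.cos (Real.pi / (k+1)) := by
        nth_rewrite 2 [hAB]
        linear_combination -h0
      exact mul_left_cancel₀ hAne h2
    have heq := Real.injOn_cos (theta_mem j) (theta_mem k) hcos
    have hne1 : ((j:ℝ) + 1) ≠ 0 := by positivity
    have hne2 : ((k:ℝ) + 1) ≠ 0 := by positivity
    rw [div_eq_div_iff hne1 hne2] at heq
    have hjk : (j:ℝ) = (k:ℝ) := by
      have := mul_left_cancel₀ Real.pi_ne_zero (by linarith : Real.pi * ((k:ℝ)+1) = Real.pi * ((j:ℝ)+1))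
      linarith
    exact h (Nat.cast_injective hjk)
  have ha : a = 0 := by
    rcases mul_eq_zero.1 hAzero with h' | h'
    · exact h'
    · exact absurd h' hLjpos.ne'
  simp [ha]

lemma measurable_seg (k : ℕ) : MeasurableSet (seg k) := by
  rw [seg_eq]
  exact (isCompact_Icc.image (continuous_id.smul continuous_const)).isClosed.measurableSet

lemma measure_union_inter_ball {r : ℝ} :
    μH[1] ((⋃ k, seg k) ∩ ball (0 : EuclideanSpace ℝ (Fin 2)) r)
      = ∑' k : ℕ, ENNReal.ofReal (min ((2:ℝ) ^ (-(k:ℝ))) r) := by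
  haveI := MeasureTheory.Measure.noAtoms_hausdorff (X := EuclideanSpace ℝ (Fin 2)) one_pos
  rw [iUnion_inter]
  rw [measure_iUnion₀]
  · exact tsum_congr fun k => measure_seg_inter_ball k r
  · intro j k hjk
    refine measure_mono_null (fun x hx => ?_) (measure_singleton (0 : EuclideanSpace ℝ (Fin 2)))
    exact seg_inter_seg hjk ⟨hx.1.1, hx.2.1⟩
  · exact fun k => ((measurable_seg k).inter measurableSet_ball).nullMeasurableSet

set_option maxHeartbeats 1000000 in
lemma main_calc (n : ℕ) :
    μH[1] ((⋃ k, seg k) ∩ ball (0 : EuclideanSpace ℝ (Fin 2)) ((2:ℝ) ^ (-(n:ℝ))))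
      = ENNReal.ofReal ((2 + n) * (2:ℝ) ^ (-(n:ℝ))) := by
  rw [measure_union_inter_ball]
  have key : ∑' (k : ℕ), ENNReal.ofReal (min ((2:ℝ) ^ (-(k:ℝ))) ((2:ℝ) ^ (-(n:ℝ))))
      = (∑ i ∈ Finset.range n, ENNReal.ofReal (min ((2:ℝ) ^ (-(i:ℝ))) ((2:ℝ) ^ (-(n:ℝ)))))
        + ∑' (i : ℕ), ENNReal.ofReal (min ((2:ℝ) ^ (-((i + n : ℕ):ℝ))) ((2:ℝ) ^ (-(n:ℝ)))) :=
    (Summable.sum_add_tsum_nat_add' (k := n) ENNReal.summable).symm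
  rw [key]
  have hsum1 : (∑ i ∈ Finset.range n, ENNReal.ofReal (min ((2:ℝ) ^ (-(i:ℝ))) ((2:ℝ) ^ (-(n:ℝ)))))
      = n * ENNReal.ofReal ((2:ℝ) ^ (-(n:ℝ))) := by
    have hmin : ∀ i ∈ Finset.range n, ENNReal.ofReal (min ((2:ℝ) ^ (-(i:ℝ))) ((2:ℝ) ^ (-(n:ℝ))))
        = ENNReal.ofReal ((2:ℝ) ^ (-(n:ℝ))) := by
      intro i hi
      have hi' : (i : ℝ) ≤ n := by exact_mod_cast (Finset.mem_range.1 hi).le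
      rw [min_eq_right]
      exact Real.rpow_le_rpow_left_iff one_lt_two |>.2 (by linarith)
    rw [Finset.sum_congr rfl hmin, Finset.sum_const, Finset.card_range, nsmul_eq_mul]
  have hsum2 : (∑' (i : ℕ), ENNReal.ofReal (min ((2:ℝ) ^ (-((i + n : ℕ):ℝ))) ((2:ℝ) ^ (-(n:ℝ)))))
      = ENNReal.ofReal 2 * ENNReal.ofReal ((2:ℝ) ^ (-(n:ℝ))) := by
    have hterm : ∀ i : ℕ, ENNReal.ofReal (min ((2:ℝ) ^ (-((i + n : ℕ):ℝ))) ((2:ℝ) ^ (-(n:ℝ))))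
        = ENNReal.ofReal ((1/2:ℝ)^i) * ENNReal.ofReal ((2:ℝ) ^ (-(n:ℝ))) := by
      intro i
      rw [min_eq_left]
      · rw [← ENNReal.ofReal_mul (by positivity)]
        congr 1
        push_cast
        rw [neg_add, Real.rpow_add two_pos]
        congr 1
        rw [show (1/2:ℝ) = (2:ℝ)^(-1:ℝ) by rw [Real.rpow_neg_one]; norm_num,
          ← Real.rpow_natCast ((2:ℝ)^(-1:ℝ)) i, ← Real.rpow_mul (by norm_num)]
        norm_num
      · apply Real.rpow_le_rpow_left_iff one_lt_two |>.2
        push_cast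
        linarith [Nat.cast_nonneg (α := ℝ) i]
    rw [tsum_congr hterm, ENNReal.tsum_mul_right]
    congr 1
    rw [← ENNReal.ofReal_tsum_of_nonneg (fun i => by positivity)
      (summable_geometric_of_lt_one (by norm_num) (by norm_num))]
    rw [tsum_geometric_of_lt_one (by norm_num) (by norm_num)]
    norm_num
  rw [hsum1, hsum2]
  rw [show ((2:ℝ) + n) * (2:ℝ) ^ (-(n:ℝ)) = (n:ℝ) * (2:ℝ) ^ (-(n:ℝ)) + 2 * (2:ℝ) ^ (-(n:ℝ)) by ring]
  rw [ENNReal.ofReal_add (by positivity) (by positivity), ENNReal.ofReal_mul (by positivity),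
    ENNReal.ofReal_mul (by norm_num), ENNReal.ofReal_natCast]


/-- `S = ⋃ₖ s_k` is not Ahlfors regular at the origin: no upper
density bound `ℋ¹(S ∩ B_r(0)) ≤ c₂ r` can hold for all small `r`; in
particular `ℋ¹(S ∩ B_{2^{-n}}(0)) = (2+n)·2^{-n}` for every `n`. -/
theorem not_ahlfors_regular_at_origin :
    (∀ c₂ : ℝ, 0 < c₂ → ∀ r₀ : ℝ, 0 < r₀ → ∃ r : ℝ, 0 < r ∧ r < r₀ ∧
        ENNReal.ofReal (c₂ * r) < μH[1] ((⋃ k, seg k) ∩ ball 0 r)) ∧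
    (∀ n : ℕ, μH[1] ((⋃ k, seg k) ∩ ball 0 ((2 : ℝ) ^ (-(n : ℝ)))) =
        ENNReal.ofReal ((2 + n) * (2 : ℝ) ^ (-(n : ℝ)))) := by
  constructor
  · intro c₂ hc₂ r₀ hr₀
    obtain ⟨n₁, hn₁⟩ := exists_pow_lt_of_lt_one hr₀ (by norm_num : (1/2:ℝ) < 1)
    obtain ⟨n₂, hn₂⟩ := exists_nat_gt c₂
    set n := max n₁ n₂ with hn
    refine ⟨(2:ℝ) ^ (-(n:ℝ)), Real.rpow_pos_of_pos two_pos _, ?_, ?_⟩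
    · have h1 : (2:ℝ) ^ (-(n:ℝ)) ≤ (2:ℝ) ^ (-(n₁:ℝ)) := by
        apply Real.rpow_le_rpow_left_iff one_lt_two |>.2
        have : (n₁ : ℝ) ≤ n := by exact_mod_cast le_max_left n₁ n₂
        linarith
      have h2 : (2:ℝ) ^ (-(n₁:ℝ)) = (1/2:ℝ) ^ n₁ := by
        rw [show (1/2:ℝ) = (2:ℝ)^(-1:ℝ) by rw [Real.rpow_neg_one]; norm_num,
          ← Real.rpow_natCast ((2:ℝ)^(-1:ℝ)) n₁, ← Real.rpow_mul (by norm_num)]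
        norm_num
      linarith
    · rw [main_calc n]
      have hrpos : (0:ℝ) < (2:ℝ) ^ (-(n:ℝ)) := Real.rpow_pos_of_pos two_pos _
      rw [ENNReal.ofReal_lt_ofReal_iff (by positivity)]
      have hcn : c₂ < 2 + (n:ℝ) := by
        have : (n₂ : ℝ) ≤ n := by exact_mod_cast le_max_right n₁ n₂
        linarith
      exact mul_lt_mul_of_pos_right hcn hrpos
  · exact main_calc
end

section
/- Let Σ ⊆ ℝ² be a compact connected set, x ∈ Σ, 0 < r < diam(Σ)/2, and define Σ' = (Σ \ cl(B_r(x))) ∪ ∂B_r(x), where ∂B_r(x) is the circle of radius r centered at x. Then Σ' is compact and connected. -/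
open Set Metric

/-- replacing the part of a compact connected set `Σ` inside a
small ball by the bounding circle preserves compactness and connectedness. -/
theorem circle_replacement_compact_connected
    (S : Set (EuclideanSpace ℝ (Fin 2))) (hSc : IsCompact S) (hSconn : IsConnected S)
    (x : EuclideanSpace ℝ (Fin 2)) (hx : x ∈ S) (r : ℝ)
    (hr0 : 0 < r) (hr : r < diam S / 2) :
    IsCompact ((S \ closedBall x r) ∪ sphere x r) ∧
      IsConnected ((S \ closedBall x r) ∪ sphere x r) := by
  have hsphc : IsCompact (sphere x r) := isCompact_sphere x r
  -- rewrite the set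
  have heq : (S \ closedBall x r) ∪ sphere x r = (S ∪ sphere x r) \ ball x r := by
    ext z
    simp only [mem_union, mem_diff, mem_sphere, mem_closedBall, mem_ball]
    constructor
    · rintro (⟨hz, hzr⟩ | hz)
      · exact ⟨Or.inl hz, fun h => hzr h.le⟩
      · exact ⟨Or.inr hz, by rw [hz]; exact lt_irrefl r⟩
    · rintro ⟨hz | hz, hzr⟩
      · rcases eq_or_lt_of_le (not_lt.mp hzr) with h | h
        · exact Or.inr h.symm
        · exact Or.inl ⟨hz, not_le.mpr h⟩
      · exact Or.inr hz
  have hcomp : IsCompact ((S \ closedBall x r) ∪ sphere x r) := by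
    rw [heq]; exact (hSc.union hsphc).diff isOpen_ball
  -- the sphere is connected
  have hrank : 1 < Module.rank ℝ (EuclideanSpace ℝ (Fin 2)) := by
    have : Module.rank ℝ (EuclideanSpace ℝ (Fin 2)) = 2 := by
      rw [← Module.finrank_eq_rank ℝ, finrank_euclideanSpace_fin]; norm_num
    rw [this]; norm_num
  have hsphconn : IsConnected (sphere x r) := isConnected_sphere hrank x hr0.le
  obtain ⟨p, hp⟩ := hsphconn.nonempty
  set K : Set (EuclideanSpace ℝ (Fin 2)) := S \ ball x r with hK
  have hKc : IsCompact K := hSc.diff isOpen_ball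
  haveI : CompactSpace K := isCompact_iff_compactSpace.mp hKc
  -- key: each connected component of K meets the sphere
  have key : ∀ y ∈ K, (connectedComponentIn K y ∩ sphere x r).Nonempty := by
    intro y hy
    by_contra hcon
    rw [not_nonempty_iff_eq_empty] at hcon
    set y' : K := ⟨y, hy⟩ with hy'
    set F : Set K := {z : K | (z : EuclideanSpace ℝ (Fin 2)) ∈ sphere x r} with hF
    have hFcl : IsClosed F := isClosed_sphere.preimage continuous_subtype_val
    have hFc : IsCompact F := hFcl.isCompact
    have hdisj : (F ∩ ⋂ Z : { Z : Set K // IsClopen Z ∧ y' ∈ Z }, (Z : Set K)) = ∅ := by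
      rw [← connectedComponent_eq_iInter_isClopen y']
      rw [eq_empty_iff_forall_notMem]
      rintro z ⟨hz1, hz2⟩
      have : (z : EuclideanSpace ℝ (Fin 2)) ∈ connectedComponentIn K y ∩ sphere x r := by
        refine ⟨?_, hz1⟩
        rw [connectedComponentIn_eq_image hy]
        exact ⟨z, hz2, rfl⟩
      rw [hcon] at this
      exact this
    obtain ⟨t, ht⟩ := hFc.elim_finite_subfamily_closed _ (fun Z => Z.2.1.isClosed) hdisj
    set U : Set K := ⋂ Z ∈ t, (Z : Set K) with hU
    have hUclopen : IsClopen U := isClopen_biInter_finset (fun Z _ => Z.2.1)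
    have hyU : y' ∈ U := mem_iInter₂.mpr fun Z _ => Z.2.2
    set A : Set (EuclideanSpace ℝ (Fin 2)) := Subtype.val '' U with hA
    set B : Set (EuclideanSpace ℝ (Fin 2)) := Subtype.val '' Uᶜ with hB
    have hAcl : IsClosed A :=
      (hUclopen.isClosed.isCompact.image continuous_subtype_val).isClosed
    have hBcl : IsClosed B :=
      ((hUclopen.isOpen.isClosed_compl).isCompact.image continuous_subtype_val).isClosed
    have hcover : S ⊆ A ∪ (B ∪ (S ∩ closedBall x r)) := by
      intro s hs
      by_cases hsb : dist s x ≤ r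
      · exact Or.inr (Or.inr ⟨hs, mem_closedBall.mpr hsb⟩)
      · have hsK : s ∈ K := ⟨hs, fun h => hsb (le_of_lt (mem_ball.mp h))⟩
        by_cases hsU : (⟨s, hsK⟩ : K) ∈ U
        · exact Or.inl ⟨⟨s, hsK⟩, hsU, rfl⟩
        · exact Or.inr (Or.inl ⟨⟨s, hsK⟩, hsU, rfl⟩)
    have h1 : (S ∩ A).Nonempty := ⟨y, hy.1, ⟨y', hyU, rfl⟩⟩
    have h2 : (S ∩ (B ∪ (S ∩ closedBall x r))).Nonempty :=
      ⟨x, hx, Or.inr ⟨hx, mem_closedBall_self hr0.le⟩⟩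
    obtain ⟨z, hzS, hzA, hzrest⟩ :=
      isPreconnected_closed_iff.mp hSconn.isPreconnected A (B ∪ (S ∩ closedBall x r))
        hAcl (hBcl.union (hSc.isClosed.inter isClosed_closedBall)) hcover h1 h2
    obtain ⟨u, huU, huz⟩ := hzA
    rcases hzrest with ⟨w, hwU, hwz⟩ | ⟨-, hzb⟩
    · have : u = w := Subtype.val_injective (huz.trans hwz.symm)
      exact hwU (this ▸ huU)
    · have hzK : z ∈ K := huz ▸ u.2
      have hzsph : z ∈ sphere x r := by
        have h1 : ¬ dist z x < r := fun h => hzK.2 (mem_ball.mpr h)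
        exact mem_sphere.mpr (le_antisymm (mem_closedBall.mp hzb) (not_lt.mp h1))
      have huF : u ∈ F := by rw [hF]; simp only [mem_setOf_eq, huz]; exact hzsph
      have : u ∈ F ∩ ⋂ Z ∈ t, (Z : Set K) := ⟨huF, huU⟩
      rw [ht] at this
      exact this
  -- now connectedness
  have hKsub : K ⊆ (S \ closedBall x r) ∪ sphere x r := by
    intro z hz
    by_cases h : dist z x = r
    · exact Or.inr (mem_sphere.mpr h)
    · refine Or.inl ⟨hz.1, fun hb => ?_⟩
      have : ¬ dist z x < r := fun h' => hz.2 (mem_ball.mpr h')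
      exact h (le_antisymm (mem_closedBall.mp hb) (not_lt.mp this))
  have hpre : IsPreconnected ((S \ closedBall x r) ∪ sphere x r) := by
    apply isPreconnected_of_forall p
    intro z hz
    rcases hz with hz | hz
    · have hzK : z ∈ K := ⟨hz.1, fun h => hz.2 (mem_closedBall.mpr (le_of_lt (mem_ball.mp h)))⟩
      obtain ⟨q, hq1, hq2⟩ := key z hzK
      refine ⟨sphere x r ∪ connectedComponentIn K z, ?_, Or.inl hp,
        Or.inr (mem_connectedComponentIn hzK), ?_⟩
      · exact union_subset (subset_union_right) ((connectedComponentIn_subset K z).trans hKsub)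
      · exact hsphconn.isPreconnected.union q hq2 hq1
          (isPreconnected_connectedComponentIn)
    · exact ⟨sphere x r, subset_union_right, hp, hz, hsphconn.isPreconnected⟩
  exact ⟨hcomp, ⟨p, Or.inr hp⟩, hpre⟩
end

section
/- Let F be a set function on the open subsets of a bounded open Ω ⊆ ℝ² that is monotone and locally maxitive at A = Ω \ Σ with threshold r_A > 0 (i.e., for all 0 < r < r_A and x ∈ Ω, F(A_r(x) ∪ B_r^Ω(x)) = F(A_r(x)) where A_r(x) = A \ cl(B_r(x)) and B_r^Ω(x) = B_r(x) ∩ Ω). Then for Σ' = (Σ \ cl(B_r(x))) ∪ ∂B_r(x) with x ∈ Σ ⊆ Ω and 0 < r < r_A, one has F(Ω \ Σ') ≤ F(Ω \ Σ). -/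
open Set Metric ENNReal

/-- if `F` is monotone and locally maxitive at `A = Ω \ Σ` with
threshold `r_A`, then the circle replacement does not increase `F`:
`F(Ω \ Σ') ≤ F(Ω \ Σ)` where `Σ' = (Σ \ cl B_r(x)) ∪ ∂B_r(x)`. -/
theorem circle_replacement_decreases
    (Ω : Set (EuclideanSpace ℝ (Fin 2))) (hΩo : IsOpen Ω) (hΩb : Bornology.IsBounded Ω)
    (F : Set (EuclideanSpace ℝ (Fin 2)) → ℝ≥0∞)
    (hmono : ∀ A₁ A₂ : Set (EuclideanSpace ℝ (Fin 2)), A₁ ⊆ A₂ → F A₁ ≤ F A₂)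
    (S : Set (EuclideanSpace ℝ (Fin 2))) (hScl : IsClosed S) (hSsub : S ⊆ Ω)
    (rA : ℝ) (hrA : 0 < rA)
    (hloc : ∀ r : ℝ, 0 < r → r < rA → ∀ x ∈ Ω,
        F (((Ω \ S) \ closedBall x r) ∪ (ball x r ∩ Ω)) =
          F ((Ω \ S) \ closedBall x r))
    (x : EuclideanSpace ℝ (Fin 2)) (hx : x ∈ S) (r : ℝ) (hr0 : 0 < r) (hr : r < rA) :
    F (Ω \ ((S \ closedBall x r) ∪ sphere x r)) ≤ F (Ω \ S) := by
  have hsub : Ω \ ((S \ closedBall x r) ∪ sphere x r) ⊆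
      ((Ω \ S) \ closedBall x r) ∪ (ball x r ∩ Ω) := by
    intro y hy
    obtain ⟨hyΩ, hyn⟩ := hy
    rw [mem_union] at hyn
    push_neg at hyn
    by_cases hb : y ∈ ball x r
    · exact Or.inr ⟨hb, hyΩ⟩
    · have hncb : y ∉ closedBall x r := by
        intro hc
        rcases (mem_closedBall.mp hc).lt_or_eq with h | h
        · exact hb (mem_ball.mpr h)
        · exact hyn.2 (mem_sphere.mpr h)
      exact Or.inl ⟨⟨hyΩ, fun hS => hyn.1 ⟨hS, hncb⟩⟩, hncb⟩
  calc F (Ω \ ((S \ closedBall x r) ∪ sphere x r))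
      ≤ F (((Ω \ S) \ closedBall x r) ∪ (ball x r ∩ Ω)) := hmono _ _ hsub
    _ = F ((Ω \ S) \ closedBall x r) := hloc r hr0 hr x (hSsub hx)
    _ ≤ F (Ω \ S) := hmono _ _ diff_subset
end
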